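/- Social-welfare comparison of search orders (uniform case): with Δp = p1 − p2, the total social values satisfy V₁ − V₂ = −Δp³/3 + (A−1)²·Δp, and the social welfares satisfy SW₁ − SW₂ = −Δp³/3. In particular, for p1 > p2 social welfare is strictly higher when the cheaper seller is searched first. -/
import Mathlib


open MeasureTheory

lemma integral_mul_add_lin (a b c : ℝ) :
    (∫ u in a..b, u * (u + c)) = (b^3 - a^3)/3 + c*(b^2 - a^2)/2 := by
  have h : (∫ u in a..b, u * (u + c)) = (∫ u in a..b, u^2) + c * ∫ u in a..b, u := by
    rw [← intervalIntegral.integral_const_mul, ← intervalIntegral.integral_add]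
    · congr 1; ext u; ring
    · exact (intervalIntegral.intervalIntegrable_pow 2)
    · exact (intervalIntegral.intervalIntegrable_id.const_mul c)
  rw [h, integral_pow, integral_id]; ring

lemma integral_mul_sub_lin (a b c : ℝ) :
    (∫ u in a..b, u * (u - c)) = (b^3 - a^3)/3 - c*(b^2 - a^2)/2 := by
  have := integral_mul_add_lin a b (-c)
  simp only [← sub_eq_add_neg] at this
  rw [this]; ring

/-- Gross social value when seller 1 (price `p1`) is searched first
(uniform match utilities, reservation value `A`, `Δp = p1 - p2`). -/
noncomputable def V1 (A p1 p2 : ℝ) : ℝ :=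
  ((∫ u in (A + (p1 - p2))..1, u)
      + ∫ u in p1..(A + (p1 - p2)), u * (u - (p1 - p2)))
    + ((A + (p1 - p2)) * (∫ u in A..1, u)
      + ∫ u in p2..A, u * (u + (p1 - p2)))

/-- Gross social value when seller 2 (price `p2`) is searched first. -/
noncomputable def V2 (A p1 p2 : ℝ) : ℝ :=
  ((∫ u in (A - (p1 - p2))..1, u)
      + ∫ u in p2..(A - (p1 - p2)), u * (u + (p1 - p2)))
    + ((A - (p1 - p2)) * (∫ u in A..1, u)
      + ∫ u in p1..A, u * (u - (p1 - p2)))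

/-- Social welfare nets out expected search costs, `s = (1-A)²/2`. -/
noncomputable def SW1 (A p1 p2 : ℝ) : ℝ := V1 A p1 p2 - (A + (p1 - p2)) * ((1-A)^2/2)

noncomputable def SW2 (A p1 p2 : ℝ) : ℝ := V2 A p1 p2 - (A - (p1 - p2)) * ((1-A)^2/2)

/-- Social-welfare comparison of search orders (uniform case):
`V₁ - V₂ = -Δp³/3 + (A-1)²·Δp` and `SW₁ - SW₂ = -Δp³/3`; in particular, for
`p1 > p2` welfare is strictly higher when the cheaper seller is searched first. -/
theorem welfare_comparison
    (A p1 p2 : ℝ) (hA : A ∈ Set.Ioo (0:ℝ) 1)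
    (hp2 : 0 ≤ p2) (hp21 : p2 ≤ p1) (hp1A : p1 ≤ A)
    (hgap : p1 - p2 ≤ 1 - A) :
    V1 A p1 p2 - V2 A p1 p2 = -(p1 - p2)^3/3 + (A-1)^2 * (p1 - p2)
      ∧ SW1 A p1 p2 - SW2 A p1 p2 = -(p1 - p2)^3/3
      ∧ (p2 < p1 → SW1 A p1 p2 < SW2 A p1 p2) := by
  have hd : V1 A p1 p2 - V2 A p1 p2 = -(p1 - p2)^3/3 + (A-1)^2 * (p1 - p2) := by
    simp only [V1, V2, integral_mul_add_lin, integral_mul_sub_lin, integral_id]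
    ring
  have hsw : SW1 A p1 p2 - SW2 A p1 p2 = -(p1 - p2)^3/3 := by
    simp only [SW1, SW2]; rw [sub_sub_sub_comm, hd]; ring
  refine ⟨hd, hsw, fun hlt => ?_⟩
  have hpos : 0 < (p1 - p2)^3 := pow_pos (by linarith) 3
  nlinarith [hsw]
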